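/- arXiv:2311.07284 — 7 statements merged into one kernel-verified Lean document; each statement's English description precedes it below -/
import Mathlib

section
/- Let A and B be n×r real matrices, each of rank r ≤ n, having the same column space. Then the r×r matrix A†B is invertible and its inverse is B†A, where † denotes the Moore-Penrose pseudo-inverse. -/
/-! Column inclusion `col A ⊆ col B` means `A = B X` for some `X`, and then `B (B†A) = B (B†B) X = A`
because `B†B = 1`; hence `(A†B)(B†A) = A†A = 1`, and symmetrically. -/

open Matrix
/-- The Moore–Penrose pseudo-inverse of a full-column-rank matrix: `M† = (MᵀM)⁻¹Mᵀ`. -/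
noncomputable def pinv {m r : ℕ} (M : Matrix (Fin m) (Fin r) ℝ) : Matrix (Fin r) (Fin m) ℝ :=
  (Mᵀ * M)⁻¹ * Mᵀ

namespace Matrix

variable {m n k R : Type*} [Fintype n]

theorem isUnit_of_rank_eq_card [Field R] [DecidableEq n] {A : Matrix n n R}
    (h : A.rank = Fintype.card n) : IsUnit A := by
  rw [← mulVec_surjective_iff_isUnit]
  refine (LinearMap.range_eq_top (f := A.mulVecLin)).mp (Submodule.eq_top_of_finrank_eq ?_)
  rw [← rank, h, Module.finrank_fintype_fun_eq_card]

theorem isUnit_transpose_mul_self_of_rank_eq_card [Fintype m] [Field R] [LinearOrder R]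
    [IsStrictOrderedRing R] [DecidableEq n] {A : Matrix m n R} (h : A.rank = Fintype.card n) :
    IsUnit (Aᵀ * A) :=
  isUnit_of_rank_eq_card (by rw [rank_transpose_mul_self, h])

theorem exists_mul_eq_of_range_mulVecLin_le [CommSemiring R] [Fintype k] [DecidableEq k]
    {M : Matrix m n R} {N : Matrix m k R}
    (h : LinearMap.range N.mulVecLin ≤ LinearMap.range M.mulVecLin) :
    ∃ X : Matrix n k R, M * X = N := by
  choose x hx using fun j => h ⟨Pi.single j 1, rfl⟩
  refine ⟨(of x)ᵀ, ext fun i j => ?_⟩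
  have hcol := congrFun (hx j) i
  simp only [mulVecLin_apply, mulVec_single_one] at hcol
  simpa [mul_apply, mulVec, dotProduct] using hcol

end Matrix

theorem pinv_mul_self {m r : ℕ} {M : Matrix (Fin m) (Fin r) ℝ} (hM : M.rank = r) :
    pinv M * M = 1 := by
  rw [pinv, Matrix.mul_assoc, nonsing_inv_mul]
  exact (isUnit_iff_isUnit_det _).mp (isUnit_transpose_mul_self_of_rank_eq_card (by simpa))

theorem mul_pinv_mul_of_range_le {m r k : ℕ} {M : Matrix (Fin m) (Fin r) ℝ}
    {N : Matrix (Fin m) (Fin k) ℝ} (hM : M.rank = r)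
    (h : LinearMap.range N.mulVecLin ≤ LinearMap.range M.mulVecLin) :
    M * (pinv M * N) = N := by
  obtain ⟨X, rfl⟩ := exists_mul_eq_of_range_mulVecLin_le h
  rw [← Matrix.mul_assoc (pinv M), pinv_mul_self hM, Matrix.one_mul]

theorem pinv_mul_mul_pinv_mul {m r : ℕ} {A B : Matrix (Fin m) (Fin r) ℝ} (hA : A.rank = r)
    (hB : B.rank = r) (h : LinearMap.range A.mulVecLin ≤ LinearMap.range B.mulVecLin) :
    pinv A * B * (pinv B * A) = 1 := by
  rw [Matrix.mul_assoc, mul_pinv_mul_of_range_le hB h, pinv_mul_self hA]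

theorem stmt2_general {n r : ℕ} (A B : Matrix (Fin n) (Fin r) ℝ)
    (hA : A.rank = r) (hB : B.rank = r)
    (hcol : LinearMap.range A.mulVecLin = LinearMap.range B.mulVecLin) :
    (pinv A * B) * (pinv B * A) = 1 ∧ (pinv B * A) * (pinv A * B) = 1 :=
  ⟨pinv_mul_mul_pinv_mul hA hB hcol.le, pinv_mul_mul_pinv_mul hB hA hcol.ge⟩

theorem stmt2 {n r : ℕ} (hr : r ≤ n) (A B : Matrix (Fin n) (Fin r) ℝ)
    (hA : A.rank = r) (hB : B.rank = r)
    (hcol : LinearMap.range A.mulVecLin = LinearMap.range B.mulVecLin) :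
    (pinv A * B) * (pinv B * A) = 1 ∧ (pinv B * A) * (pinv A * B) = 1 :=
  stmt2_general A B hA hB hcol
end

section
/- Let x = (x_1,...,x_n) with each x_i an independent standard Gaussian, and let y = x/‖x‖. Then for any nonzero a ∈ R^n and any δ ≥ 0, the probability that |aᵀy| ≤ δ‖a‖/(6√(n + ln(1/δ))) is at most δ. -/
/-!
Write `r = ‖x‖`. If `|⟪a, x⟫| / r ≤ s` then either `r ≥ T` or `|⟪a, x⟫| ≤ s T`. The linear form
`⟪a, x⟫` is `N(0, ‖a‖²)`, whose density is at most `1 / √(2π) ‖a‖`, so the second event has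
probability at most `s T / ‖a‖`. The first is a chi-square tail: Chernoff's bound with
`E exp(x₁² / 4) = √2` gives `P(r² ≥ T²) ≤ √2ⁿ exp(-T² / 4)`. With `T = 3 √(n + log (1/δ))`
both terms are at most `δ / 2`.
-/

open MeasureTheory ProbabilityTheory Real
open scoped NNReal ENNReal

section SumSq

variable {ι : Type*} [Fintype ι]

lemma sum_sq_eq_zero_iff {x : ι → ℝ} : ∑ i, x i ^ 2 = 0 ↔ x = 0 := by
  simp [sq, Finset.sum_mul_self_eq_zero_iff, funext_iff]

lemma sum_sq_pos {x : ι → ℝ} (hx : x ≠ 0) : 0 < ∑ i, x i ^ 2 :=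
  (by positivity : (0 : ℝ) ≤ _).lt_of_ne' (mt sum_sq_eq_zero_iff.1 hx)

lemma abs_sum_mul_le_of_abs_sum_mul_div_sqrt_le {a x : ι → ℝ} {s : ℝ}
    (h : |∑ i, a i * (x i / √(∑ j, x j ^ 2))| ≤ s) :
    |∑ i, a i * x i| ≤ s * √(∑ j, x j ^ 2) := by
  rcases (sqrt_nonneg (∑ j, x j ^ 2)).eq_or_lt with hr | hr
  · obtain rfl : x = 0 := sum_sq_eq_zero_iff.1 (sqrt_eq_zero'.1 hr.symm |>.antisymm (by positivity))
    simp
  · have hsum : ∑ i, a i * x i = √(∑ j, x j ^ 2) * ∑ i, a i * (x i / √(∑ j, x j ^ 2)) := by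
      rw [Finset.mul_sum]
      exact Finset.sum_congr rfl fun i _ => by field_simp
    rw [hsum, abs_mul, abs_of_pos hr, mul_comm]
    gcongr

lemma setOf_abs_sum_mul_div_sqrt_le_subset (a : ι → ℝ) {s T : ℝ} (hs : 0 ≤ s) (hT : 0 ≤ T) :
    {x : ι → ℝ | |∑ i, a i * (x i / √(∑ j, x j ^ 2))| ≤ s} ⊆
      {x | |∑ i, a i * x i| ≤ s * T} ∪ {x | T ^ 2 ≤ ∑ i, x i ^ 2} := by
  intro x hx
  by_cases hxT : T ^ 2 ≤ ∑ i, x i ^ 2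
  · exact Or.inr hxT
  · refine Or.inl ((abs_sum_mul_le_of_abs_sum_mul_div_sqrt_le hx).trans ?_)
    exact mul_le_mul_of_nonneg_left (sqrt_le_iff.2 ⟨hT, (not_le.1 hxT).le⟩) hs

end SumSq

lemma gaussianPDFReal_le (μ : ℝ) (v : ℝ≥0) (x : ℝ) :
    gaussianPDFReal μ v x ≤ (√(2 * π * v))⁻¹ :=
  mul_le_of_le_one_right (by positivity)
    (exp_le_one_iff.2 (div_nonpos_of_nonpos_of_nonneg (neg_nonpos.2 (sq_nonneg _)) (by positivity)))

lemma gaussianReal_setOf_abs_le_le {v : ℝ≥0} (hv : v ≠ 0) {c : ℝ} (hc : 0 ≤ c) :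
    gaussianReal 0 v {x | |x| ≤ c} ≤ ENNReal.ofReal (c / √v) := by
  have hset : {x : ℝ | |x| ≤ c} = Set.Icc (-c) c := by ext x; simp [abs_le]
  have hconst : 2 * c * (√(2 * π * v))⁻¹ ≤ c / √v := by
    have h2 : 2 ≤ √(2 * π) := le_sqrt_of_sq_le (by nlinarith [pi_gt_three])
    calc 2 * c * (√(2 * π * v))⁻¹ = c / √v * (2 / √(2 * π)) := by
          rw [sqrt_mul' _ v.coe_nonneg]; field_simp
      _ ≤ c / √v * 1 := by gcongr; exact div_le_one_of_le₀ h2 (sqrt_nonneg _)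
      _ = c / √v := mul_one _
  calc gaussianReal 0 v {x | |x| ≤ c}
      = ∫⁻ x in Set.Icc (-c) c, gaussianPDF 0 v x := by rw [hset, gaussianReal_apply _ hv]
    _ ≤ ∫⁻ _ in Set.Icc (-c) c, ENNReal.ofReal (√(2 * π * v))⁻¹ :=
        lintegral_mono fun x => ENNReal.ofReal_le_ofReal (gaussianPDFReal_le 0 v x)
    _ = ENNReal.ofReal (2 * c * (√(2 * π * v))⁻¹) := by
        rw [setLIntegral_const, volume_Icc, ← ENNReal.ofReal_mul (by positivity), mul_comm]
        ring_nf
    _ ≤ ENNReal.ofReal (c / √v) := ENNReal.ofReal_le_ofReal hconst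

section LinearForm

variable {ι : Type*} [Fintype ι]

lemma map_pi_gaussianReal_sum_mul (a : ι → ℝ) :
    (Measure.pi fun _ : ι => gaussianReal 0 1).map (fun x => ∑ i, a i * x i) =
      gaussianReal 0 (∑ i, a i ^ 2).toNNReal := by
  have hform : (fun x : ι → ℝ => ∑ i, a i * x i) =
      innerSL ℝ (WithLp.toLp 2 a : EuclideanSpace ℝ ι) ∘ WithLp.toLp 2 := by
    ext x
    simp [PiLp.inner_apply, mul_comm]
  rw [hform, ← Measure.map_map (by fun_prop) (by fun_prop), map_pi_eq_stdGaussian,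
    IsGaussian.map_eq_gaussianReal, integral_strongDual_stdGaussian,
    variance_dual_stdGaussian, innerSL_apply_norm, EuclideanSpace.real_norm_sq_eq]

lemma measure_pi_gaussianReal_abs_sum_mul_le {a : ι → ℝ} (ha : a ≠ 0) {c : ℝ} (hc : 0 ≤ c) :
    (Measure.pi fun _ : ι => gaussianReal 0 1) {x | |∑ i, a i * x i| ≤ c} ≤
      ENNReal.ofReal (c / √(∑ i, a i ^ 2)) := by
  have hV : (∑ i, a i ^ 2).toNNReal ≠ 0 := (toNNReal_pos.2 (sum_sq_pos ha)).ne'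
  calc _ = gaussianReal 0 (∑ i, a i ^ 2).toNNReal {u | |u| ≤ c} := by
        rw [← map_pi_gaussianReal_sum_mul, Measure.map_apply (by fun_prop)
          (measurableSet_le (by fun_prop) (by fun_prop))]
        rfl
    _ ≤ _ := by
        simpa [coe_toNNReal _ (sum_sq_pos ha).le] using gaussianReal_setOf_abs_le_le hV hc

end LinearForm

lemma gaussianPDFReal_mul_exp_sq_div_four (x : ℝ) :
    gaussianPDFReal 0 1 x * exp (x ^ 2 / 4) = (√(2 * π))⁻¹ * exp (-(1 / 4) * x ^ 2) := by
  rw [gaussianPDFReal, NNReal.coe_one, mul_one, sub_zero, mul_assoc, ← exp_add]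
  congr 2
  ring

lemma integrable_exp_sq_div_four_gaussianReal :
    Integrable (fun x => exp (x ^ 2 / 4)) (gaussianReal 0 1) := by
  rw [gaussianReal_of_var_ne_zero _ one_ne_zero,
    integrable_withDensity_iff_integrable_smul' (measurable_gaussianPDF _ _)
      (ae_of_all _ fun _ => gaussianPDF_lt_top)]
  simp_rw [gaussianPDF, ENNReal.toReal_ofReal (gaussianPDFReal_nonneg _ _ _), smul_eq_mul,
    gaussianPDFReal_mul_exp_sq_div_four]
  exact (integrable_exp_neg_mul_sq (by norm_num)).const_mul _

lemma integral_exp_sq_div_four_gaussianReal :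
    ∫ x, exp (x ^ 2 / 4) ∂gaussianReal 0 1 = √2 := by
  simp_rw [integral_gaussianReal_eq_integral_smul one_ne_zero, smul_eq_mul,
    gaussianPDFReal_mul_exp_sq_div_four, integral_const_mul, integral_gaussian]
  rw [← sqrt_inv, ← sqrt_mul (by positivity)]
  congr 1
  field_simp
  norm_num

lemma measureReal_pi_gaussianReal_le_sum_sq_le {ι : Type*} [Fintype ι] (t : ℝ) :
    (Measure.pi fun _ : ι => gaussianReal 0 1).real {x | t ≤ ∑ i, x i ^ 2} ≤
      √2 ^ Fintype.card ι * exp (-t / 4) := by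
  have hexp : (fun x : ι → ℝ => exp (1 / 4 * ∑ i, x i ^ 2)) = fun x => ∏ i, exp (x i ^ 2 / 4) := by
    ext x
    rw [Finset.mul_sum, exp_sum]
    ring_nf
  have hint := Integrable.fintype_prod (μ := fun _ : ι => gaussianReal 0 1)
    fun _ => integrable_exp_sq_div_four_gaussianReal
  calc _ ≤ exp (-(1 / 4) * t) * mgf (fun x : ι → ℝ => ∑ i, x i ^ 2) _ (1 / 4) :=
        measure_ge_le_exp_mul_mgf t (by norm_num) (by rw [hexp]; exact hint)
    _ = √2 ^ Fintype.card ι * exp (-t / 4) := by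
        rw [mgf, hexp, integral_fintype_prod_eq_pow (fun u => exp (u ^ 2 / 4)),
          integral_exp_sq_div_four_gaussianReal]
        ring_nf

lemma sqrt_two_pow_mul_exp_le {n : ℕ} (hn : n ≠ 0) {δ : ℝ} (hδ0 : 0 < δ) (hδ1 : δ ≤ 1) :
    √2 ^ n * exp (-(9 * (n + log (1 / δ))) / 4) ≤ δ / 2 := by
  have hL : 0 ≤ log (1 / δ) := log_nonneg (one_le_one_div hδ0 hδ1)
  have hbase : √2 * exp (-2) ≤ 1 / 2 := by
    have h3 : 3 ≤ exp 2 := by linarith [add_one_le_exp 2]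
    have h2 : √2 ≤ 3 / 2 := sqrt_le_iff.2 ⟨by norm_num, by norm_num⟩
    rw [exp_neg, ← div_eq_mul_inv, div_le_iff₀ (exp_pos 2)]
    nlinarith
  calc √2 ^ n * exp (-(9 * (n + log (1 / δ))) / 4)
      ≤ √2 ^ n * (exp (-2) ^ n * exp (-log (1 / δ))) := by
        rw [← exp_nat_mul, ← exp_add]
        gcongr
        nlinarith
    _ = (√2 * exp (-2)) ^ n * δ := by
        rw [one_div, log_inv, neg_neg, exp_log hδ0, mul_pow, mul_assoc]
    _ ≤ 1 / 2 * δ := by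
        gcongr
        calc (√2 * exp (-2)) ^ n ≤ (1 / 2) ^ n := by gcongr
          _ ≤ 1 / 2 := pow_le_of_le_one (by norm_num) (by norm_num) hn
    _ = δ / 2 := by ring

theorem stmt5 {n : ℕ} (a : Fin n → ℝ) (ha : a ≠ 0) (δ : ℝ) (hδ : 0 ≤ δ) :
    (Measure.pi fun _ : Fin n => gaussianReal 0 1)
      {x : Fin n → ℝ |
        |∑ i, a i * (x i / Real.sqrt (∑ j, x j ^ 2))| ≤
          δ * Real.sqrt (∑ i, a i ^ 2) / (6 * Real.sqrt ((n : ℝ) + Real.log (1 / δ)))} ≤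
      ENNReal.ofReal δ := by
  rcases le_or_gt 1 δ with hδ1 | hδ1
  · exact prob_le_one.trans (ENNReal.one_le_ofReal.2 hδ1)
  rcases hδ.eq_or_lt with rfl | hδ0
  · refine (measure_mono fun x hx => ?_).trans
      ((measure_pi_gaussianReal_abs_sum_mul_le ha le_rfl).trans (by simp))
    simpa using abs_sum_mul_le_of_abs_sum_mul_div_sqrt_le (s := 0) (by simpa using hx)
  have hn : n ≠ 0 := by rintro rfl; exact ha (Subsingleton.elim _ _)
  have hL : 0 ≤ log (1 / δ) := log_nonneg (one_le_one_div hδ0 hδ1.le)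
  have hA : 0 < √(∑ i, a i ^ 2) := sqrt_pos.2 (sum_sq_pos ha)
  set M := √(n + log (1 / δ))
  have hM : 0 < M := sqrt_pos.2 (by positivity)
  calc _ ≤ _ := measure_mono (setOf_abs_sum_mul_div_sqrt_le_subset a (by positivity)
        (by positivity : 0 ≤ 3 * M))
    _ ≤ _ := measure_union_le _ _
    _ ≤ ENNReal.ofReal (δ / 2) + ENNReal.ofReal (δ / 2) := by
        gcongr
        · refine (measure_pi_gaussianReal_abs_sum_mul_le ha (by positivity)).trans
            (ENNReal.ofReal_le_ofReal (le_of_eq ?_))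
          field_simp
          ring
        · rw [← ofReal_measureReal]
          refine ENNReal.ofReal_le_ofReal ((measureReal_pi_gaussianReal_le_sum_sq_le _).trans ?_)
          rw [mul_pow, sq_sqrt (by positivity), Fintype.card_fin, show (3 : ℝ) ^ 2 = 9 by norm_num]
          exact sqrt_two_pow_mul_exp_le hn hδ0 hδ1.le
    _ = ENNReal.ofReal δ := by rw [← ENNReal.ofReal_add (by positivity) (by positivity), add_halves]
end

section
/- Let U = U_1 ⊕ ... ⊕ U_s ⊆ W be a direct sum of s subspaces of a vector space W, with U-associated matrix condition number κ(U). Let Ũ ⊆ W be a subspace with dist(U, Ũ) < 1, and let Ũ_1,...,Ũ_s ⊆ Ũ satisfy dist(Ũ_i, U_i) ≤ γ < 1 for each i. If 2γ√s·κ(U) < 1, then Ũ = Ũ_1 ⊕ ... ⊕ Ũ_s. -/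
/-- The orthogonal projection onto a subspace, as an endomorphism of the ambient space. -/
noncomputable def projL {n : ℕ} (U : Submodule ℝ (EuclideanSpace ℝ (Fin n))) :
    EuclideanSpace ℝ (Fin n) →L[ℝ] EuclideanSpace ℝ (Fin n) :=
  U.subtypeL.comp (Submodule.orthogonalProjectionOnto U)

/-- Distance between subspaces: operator norm of the difference of orthogonal projections. -/
noncomputable def distS {n : ℕ} (U V : Submodule ℝ (EuclideanSpace ℝ (Fin n))) : ℝ :=
  ‖projL U - projL V‖

/-- Largest singular value of the matrix whose columns are the vectors `v k`. -/
noncomputable def famSup {n : ℕ} {ι : Type} [Fintype ι] (v : ι → EuclideanSpace ℝ (Fin n)) : ℝ :=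
  sSup {r | ∃ c : EuclideanSpace ℝ ι, ‖c‖ = 1 ∧ r = ‖∑ k, c k • v k‖}

/-- Smallest singular value of the matrix whose columns are the vectors `v k`. -/
noncomputable def famInf {n : ℕ} {ι : Type} [Fintype ι] (v : ι → EuclideanSpace ℝ (Fin n)) : ℝ :=
  sInf {r | ∃ c : EuclideanSpace ℝ ι, ‖c‖ = 1 ∧ r = ‖∑ k, c k • v k‖}


/-!
Project the `U`-associated columns: `ṽ q := P_{Ũ i} (v q) ∈ Ũ i` for `v q ∈ U i`. On block `i`,
`ṽ - v = (P_{Ũ i} - P_{U i}) v` with `‖P_{Ũ i} - P_{U i}‖ ≤ γ` and orthonormal columns, so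
Cauchy–Schwarz over the `s` blocks gives `‖∑ c_q (ṽ_q - v_q)‖ ≤ γ √s ‖c‖`, whereas
`‖∑ c_q v_q‖ ≥ σ_min ‖c‖`. As `σ_max ≥ 1`, the condition `2γ√s κ < 1` forces `γ √s < σ_min`,
so `ṽ` is linearly independent. Subspaces at distance `< 1` have equal dimension, hence block `i`
of `ṽ` is a basis of `Ũ i`, and all of `ṽ` spans a subspace of `Ũ` of dimension
`dim (⨆ i, U i) = dim Ũ`.
-/

section BlockFamily

variable {R M : Type*} [Ring R] [AddCommGroup M] [Module R M] {σ : Type*} {κ : σ → Type*}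

lemma Submodule.span_range_sigma (f : ∀ i, κ i → M) :
    Submodule.span R (Set.range fun q : Σ i, κ i => f q.1 q.2)
      = ⨆ i, Submodule.span R (Set.range (f i)) := by
  rw [Set.range_sigma_eq_iUnion_range, Submodule.span_iUnion]

lemma iSupIndep.linearIndependent_sigma {f : ∀ i, κ i → M}
    (hp : iSupIndep fun i => Submodule.span R (Set.range (f i)))
    (hf : ∀ i, LinearIndependent R (f i)) :
    LinearIndependent R fun q : Σ i, κ i => f q.1 q.2 :=
  linearIndependent_iUnion_finite hf fun _ _ _ hi => hp.disjoint_biSup hi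

lemma LinearIndependent.iSupIndep_span_range_sigma {f : ∀ i, κ i → M}
    (hf : LinearIndependent R fun q : Σ i, κ i => f q.1 q.2) :
    iSupIndep fun i => Submodule.span R (Set.range (f i)) := by
  have hblock : ∀ i, Set.range (f i)
      = (fun q : Σ i, κ i => f q.1 q.2) '' (Sigma.fst ⁻¹' {i}) := fun i => by
    rw [← Set.range_sigmaMk, ← Set.range_comp]
    rfl
  refine iSupIndep_def.2 fun i => ?_
  simp only [hblock]
  refine (hf.disjoint_span_image
    ((disjoint_compl_right (a := ({i} : Set σ))).preimage Sigma.fst)).mono_right ?_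
  exact iSup₂_le fun j hj => Submodule.span_mono (Set.image_mono fun q hq => by simp_all)

end BlockFamily

lemma LinearIndependent.span_range_eq_of_finrank_le {K V ι : Type*} [DivisionRing K]
    [AddCommGroup V] [Module K V] [Fintype ι] {w : ι → V} {W : Submodule K V}
    [FiniteDimensional K W] (hw : LinearIndependent K w) (hmem : ∀ i, w i ∈ W)
    (hW : Module.finrank K W ≤ Fintype.card ι) : Submodule.span K (Set.range w) = W :=
  Submodule.eq_of_le_of_finrank_le (Submodule.span_le.2 (Set.range_subset_iff.2 hmem))
    (by rwa [finrank_span_eq_card hw])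

lemma linearIndependent_of_norm_sum_smul_sub_lt {ι E : Type*} [Fintype ι]
    [NormedAddCommGroup E] [NormedSpace ℝ E] {v w : ι → E}
    (h : ∀ c : ι → ℝ, c ≠ 0 → ‖∑ i, c i • (w i - v i)‖ < ‖∑ i, c i • v i‖) :
    LinearIndependent ℝ w := by
  refine Fintype.linearIndependent_iff.2 fun c hc => ?_
  by_contra! hne
  have hsum : ∑ i, c i • (w i - v i) = -∑ i, c i • v i := by
    simp only [smul_sub, Finset.sum_sub_distrib, hc, zero_sub]
  exact (h c (Function.ne_iff.2 hne)).ne (by rw [hsum, norm_neg])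

lemma Orthonormal.norm_sum_smul_sq {ι E : Type*} [Fintype ι] [NormedAddCommGroup E]
    [InnerProductSpace ℝ E] {e : ι → E} (he : Orthonormal ℝ e) (c : ι → ℝ) :
    ‖∑ i, c i • e i‖ ^ 2 = ∑ i, c i ^ 2 := by
  rw [← real_inner_self_eq_norm_sq, he.inner_sum]
  simp [sq]

lemma norm_sum_sigma_smul_apply_le {σ : Type*} [Fintype σ] {κ : σ → Type*}
    [∀ i, Fintype (κ i)] {E : Type*} [NormedAddCommGroup E] [InnerProductSpace ℝ E]
    {v : (Σ i, κ i) → E} (hv : ∀ i, Orthonormal ℝ fun j => v ⟨i, j⟩)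
    {T : σ → E →L[ℝ] E} {γ : ℝ} (hγ : 0 ≤ γ) (hT : ∀ i, ‖T i‖ ≤ γ)
    (c : EuclideanSpace ℝ (Σ i, κ i)) :
    ‖∑ q, c q • T q.1 (v q)‖ ≤ γ * √(Fintype.card σ) * ‖c‖ := by
  set b : σ → E := fun i => ∑ j, c ⟨i, j⟩ • v ⟨i, j⟩
  have hsum : ∑ q, c q • T q.1 (v q) = ∑ i, T i (b i) := by
    rw [Fintype.sum_sigma]
    simp only [b, map_sum, map_smul]
  have hnorm : √(∑ i, ‖b i‖ ^ 2) = ‖c‖ := by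
    simp only [b, (hv _).norm_sum_smul_sq, EuclideanSpace.norm_eq, Real.norm_eq_abs, sq_abs,
      Fintype.sum_sigma]
  calc ‖∑ q, c q • T q.1 (v q)‖ = ‖∑ i, T i (b i)‖ := by rw [hsum]
    _ ≤ ∑ i, γ * ‖b i‖ :=
      (norm_sum_le _ _).trans (Finset.sum_le_sum fun i _ => (T i).le_of_opNorm_le (hT i) _)
    _ = γ * ∑ i, 1 * ‖b i‖ := by simp only [one_mul, Finset.mul_sum]
    _ ≤ γ * (√(∑ _i : σ, 1 ^ 2) * √(∑ i, ‖b i‖ ^ 2)) := by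
      gcongr
      exact Real.sum_mul_le_sqrt_mul_sqrt _ _ _
    _ = γ * √(Fintype.card σ) * ‖c‖ := by simp [hnorm, mul_assoc]

section DistS

variable {n : ℕ} {A B : Submodule ℝ (EuclideanSpace ℝ (Fin n))}

lemma projL_eq_starProjection (A : Submodule ℝ (EuclideanSpace ℝ (Fin n))) :
    projL A = A.starProjection := rfl

lemma distS_symm (A B : Submodule ℝ (EuclideanSpace ℝ (Fin n))) : distS A B = distS B A :=
  norm_sub_rev _ _

/-- A vector of `A` killed by `P_B` has `‖x‖ = ‖(P_A - P_B) x‖ ≤ distS A B ‖x‖`. -/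
lemma finrank_le_of_distS_lt_one (h : distS A B < 1) :
    Module.finrank ℝ A ≤ Module.finrank ℝ B := by
  refine LinearMap.finrank_le_finrank_of_injective
    (f := B.orthogonalProjectionOnto.toLinearMap ∘ₗ A.subtype) ?_
  rw [← LinearMap.ker_eq_bot, LinearMap.ker_eq_bot']
  rintro ⟨x, hx⟩ hPx
  have hPx' : B.starProjection x = 0 := congrArg Subtype.val hPx
  have hle : ‖x‖ ≤ distS A B * ‖x‖ := by
    simpa [distS, projL_eq_starProjection, Submodule.starProjection_eq_self_iff.2 hx, hPx'] using
      (projL A - projL B).le_opNorm x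
  have hx0 : ‖x‖ = 0 := by nlinarith [norm_nonneg x]
  simpa using hx0

lemma finrank_eq_of_distS_lt_one (h : distS A B < 1) :
    Module.finrank ℝ A = Module.finrank ℝ B :=
  (finrank_le_of_distS_lt_one h).antisymm (finrank_le_of_distS_lt_one (distS_symm A B ▸ h))

end DistS

section SingularValues

variable {n : ℕ} {ι : Type} [Fintype ι] (v : ι → EuclideanSpace ℝ (Fin n))

lemma famSet_eq_image :
    {r | ∃ c : EuclideanSpace ℝ ι, ‖c‖ = 1 ∧ r = ‖∑ k, c k • v k‖}
      = (fun c : EuclideanSpace ℝ ι => ‖∑ k, c k • v k‖) '' Metric.sphere 0 1 := by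
  ext r
  simp only [Set.mem_ofPred_eq, Set.mem_image, mem_sphere_zero_iff_norm, eq_comm (a := r)]

lemma isCompact_famSet :
    IsCompact {r | ∃ c : EuclideanSpace ℝ ι, ‖c‖ = 1 ∧ r = ‖∑ k, c k • v k‖} := by
  rw [famSet_eq_image]
  exact (isCompact_sphere 0 1).image (by fun_prop)

lemma famInf_le (c : EuclideanSpace ℝ ι) (hc : ‖c‖ = 1) : famInf v ≤ ‖∑ k, c k • v k‖ :=
  csInf_le (isCompact_famSet v).bddBelow ⟨c, hc, rfl⟩

lemma le_famSup (c : EuclideanSpace ℝ ι) (hc : ‖c‖ = 1) : ‖∑ k, c k • v k‖ ≤ famSup v :=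
  le_csSup (isCompact_famSet v).bddAbove ⟨c, hc, rfl⟩

lemma famInf_pos [Nonempty ι] (hv : LinearIndependent ℝ v) : 0 < famInf v := by
  have hne : {r | ∃ c : EuclideanSpace ℝ ι, ‖c‖ = 1 ∧ r = ‖∑ k, c k • v k‖}.Nonempty := by
    rw [famSet_eq_image]
    exact (NormedSpace.sphere_nonempty.2 zero_le_one).image _
  obtain ⟨c, hc, hInf⟩ := (isCompact_famSet v).sInf_mem hne
  have hc0 : c ≠ 0 := by rintro rfl; simp at hc
  rw [famInf, hInf, norm_pos_iff]
  exact fun h0 => hc0 (by ext k; exact Fintype.linearIndependent_iff.1 hv c h0 k)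

lemma one_le_famSup {k : ι} (hk : ‖v k‖ = 1) : 1 ≤ famSup v := by
  classical
  simpa [PiLp.single_apply, hk] using le_famSup v (EuclideanSpace.single k 1) (by simp)

lemma famInf_mul_norm_le (c : EuclideanSpace ℝ ι) : famInf v * ‖c‖ ≤ ‖∑ k, c k • v k‖ := by
  rcases eq_or_ne c 0 with rfl | hc
  · simp
  have hc' : 0 < ‖c‖ := norm_pos_iff.2 hc
  have h := famInf_le v (‖c‖⁻¹ • c)
    (by rw [norm_smul, norm_inv, norm_norm, inv_mul_cancel₀ hc'.ne'])
  simp only [PiLp.smul_apply, smul_eq_mul, mul_smul, ← Finset.smul_sum, norm_smul, norm_inv,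
    norm_norm] at h
  rwa [← le_div_iff₀ hc', div_eq_inv_mul]

lemma lt_famInf_of_mul_div_lt_one [Nonempty ι] (hv : LinearIndependent ℝ v) {k : ι}
    (hk : ‖v k‖ = 1) {a : ℝ} (ha : 0 ≤ a) (h : a * (famSup v / famInf v) < 1) :
    a < famInf v := by
  have hI := famInf_pos v hv
  rw [← mul_div_assoc, div_lt_one hI] at h
  nlinarith [one_le_famSup v hk]

end SingularValues

lemma linearIndependent_add_apply_of_lt_famInf {n : ℕ} {σ : Type} [Fintype σ] {κ : σ → Type}
    [∀ i, Fintype (κ i)] {v : (Σ i, κ i) → EuclideanSpace ℝ (Fin n)}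
    (hv : ∀ i, Orthonormal ℝ fun j => v ⟨i, j⟩) {T : σ → EuclideanSpace ℝ (Fin n) →L[ℝ] _}
    {γ : ℝ} (hT : ∀ i, ‖T i‖ ≤ γ) (hγ : γ * √(Fintype.card σ) < famInf v) :
    LinearIndependent ℝ fun q => v q + T q.1 (v q) := by
  refine linearIndependent_of_norm_sum_smul_sub_lt (v := v) fun c hc => ?_
  obtain ⟨q, -⟩ := Function.ne_iff.1 hc
  have hc' : 0 < ‖WithLp.toLp 2 c‖ := by simpa using hc
  calc ‖∑ q, c q • (v q + T q.1 (v q) - v q)‖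
      = ‖∑ q, (WithLp.toLp 2 c) q • T q.1 (v q)‖ := by simp
    _ ≤ γ * √(Fintype.card σ) * ‖WithLp.toLp 2 c‖ :=
      norm_sum_sigma_smul_apply_le hv ((norm_nonneg _).trans (hT q.1)) hT _
    _ < famInf v * ‖WithLp.toLp 2 c‖ := by gcongr
    _ ≤ ‖∑ q, c q • v q‖ := by simpa using famInf_mul_norm_le v (WithLp.toLp 2 c)

theorem stmt6 {n s : ℕ} (γ κ : ℝ) (d : Fin s → ℕ)
    (U Uti : Fin s → Submodule ℝ (EuclideanSpace ℝ (Fin n)))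
    (Ut : Submodule ℝ (EuclideanSpace ℝ (Fin n)))
    (hIndep : iSupIndep U)
    -- `v` lists the columns of a `U`-associated matrix: the `i`-th block of columns is an
    -- orthonormal basis of `U i`.
    (v : (Σ i : Fin s, Fin (d i)) → EuclideanSpace ℝ (Fin n))
    (hON : ∀ i : Fin s, Orthonormal ℝ (fun j : Fin (d i) => v ⟨i, j⟩))
    (hspan : ∀ i : Fin s,
      Submodule.span ℝ (Set.range fun j : Fin (d i) => v ⟨i, j⟩) = U i)
    -- `κ` is the condition number of the associated matrix
    (hκ : κ = famSup v / famInf v)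
    (hdist : distS (⨆ i, U i) Ut < 1)
    (hsub : ∀ i, Uti i ≤ Ut)
    (hγ : γ < 1)
    (hclose : ∀ i, distS (Uti i) (U i) ≤ γ)
    (hcond : 2 * γ * Real.sqrt s * κ < 1) :
    iSupIndep Uti ∧ (⨆ i, Uti i) = Ut := by
  have hLIv : LinearIndependent ℝ v :=
    (by simpa only [hspan] using hIndep : iSupIndep _).linearIndependent_sigma
      fun i => (hON i).linearIndependent
  set vt : (Σ i : Fin s, Fin (d i)) → EuclideanSpace ℝ (Fin n) :=
    fun q => projL (Uti q.1) (v q) with hvt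
  have hLIvt : LinearIndependent ℝ vt := by
    rcases isEmpty_or_nonempty (Σ i : Fin s, Fin (d i)) with _ | hne
    · exact linearIndependent_empty_type
    have q₀ := hne.some
    have hvU : ∀ q, v q ∈ U q.1 := fun q => hspan q.1 ▸ Submodule.subset_span ⟨q.2, rfl⟩
    have hvt_eq : vt = fun q => v q + (projL (Uti q.1) - projL (U q.1)) (v q) := by
      ext1 q
      simp [hvt, projL_eq_starProjection, Submodule.starProjection_eq_self_iff.2 (hvU q)]
    have hγ0 : 0 ≤ γ := (norm_nonneg _).trans (hclose q₀.1)
    have h2γ := lt_famInf_of_mul_div_lt_one v hLIv ((hON q₀.1).norm_eq_one q₀.2)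
      (a := 2 * γ * √s) (by positivity) (by rwa [hκ] at hcond)
    rw [hvt_eq]
    refine linearIndependent_add_apply_of_lt_famInf hON
      (T := fun i => projL (Uti i) - projL (U i)) hclose ?_
    rw [Fintype.card_fin]
    linarith [mul_nonneg hγ0 (Real.sqrt_nonneg (s : ℝ))]
  have hspan_t : ∀ i, Submodule.span ℝ (Set.range fun j => vt ⟨i, j⟩) = Uti i := fun i =>
    LinearIndependent.span_range_eq_of_finrank_le (w := fun j => vt ⟨i, j⟩)
      (hLIvt.comp _ sigma_mk_injective) (fun j => by simp [hvt, projL_eq_starProjection])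
      (by rw [finrank_eq_of_distS_lt_one ((hclose i).trans_lt hγ), ← hspan i,
        finrank_span_eq_card (hON i).linearIndependent])
  refine ⟨?_, ?_⟩
  · simpa only [hspan_t] using
      LinearIndependent.iSupIndep_span_range_sigma (f := fun i j => vt ⟨i, j⟩) hLIvt
  refine Submodule.eq_of_le_of_finrank_le (iSup_le hsub) ?_
  rw [← finrank_eq_of_distS_lt_one hdist, ← iSup_congr hspan, ← iSup_congr hspan_t,
    ← Submodule.span_range_sigma (f := fun i j => v ⟨i, j⟩),
    ← Submodule.span_range_sigma (f := fun i j => vt ⟨i, j⟩), finrank_span_eq_card hLIv,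
    finrank_span_eq_card hLIvt]
end

section
/- In the subspace clustering setting, let (D, E) be any element of the adjoint algebra of the first-order partial derivative operators acting from U = span{ℓ_1^d,...,ℓ_N^d} to V = span{ℓ_1^{d−1},...,ℓ_N^{d−1}} (with d ≥ 2). Then there exist constants c_1,...,c_N ∈ R such that D·ℓ_i^d = c_i·ℓ_i^d and E·ℓ_i^{d−1} = c_i·ℓ_i^{d−1} for all i ∈ [N]. -/
open MvPolynomial

/-! Put `q = D ℓ^d`. The adjoint relation gives `∂_j q = E (∂_j ℓ^d) = a_j • r` with
`r = d • E ℓ^(d-1)`: the gradient of the degree-`d` form `q` is everywhere parallel to `a`.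
Euler's identity turns this into `d • q = ℓ * r`, and `r` is again a form whose gradient is
parallel to `a` (partial derivatives commute), so induction on the degree gives `q = c • ℓ^d`.
Differentiating once more in a direction with `a_j ≠ 0` yields `E ℓ^(d-1) = c • ℓ^(d-1)`. -/

namespace MvPolynomial

theorem pderiv_pderiv_comm {R σ : Type*} [CommRing R] (i j : σ) (p : MvPolynomial σ R) :
    pderiv i (pderiv j p) = pderiv j (pderiv i p) := by
  have hX (k l m : σ) : pderiv k (pderiv l (X m : MvPolynomial σ R)) = 0 := by
    by_cases hml : m = l
    · rw [hml, pderiv_X_self, pderiv_one]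
    · rw [pderiv_X_of_ne hml, map_zero]
  -- The commutator of two derivations is a derivation, and this one kills every variable.
  have hcomm :
      ⁅pderiv i, pderiv j⁆ = (0 : Derivation R (MvPolynomial σ R) (MvPolynomial σ R)) :=
    derivation_ext fun k => by
      rw [Derivation.commutator_apply, hX, hX, sub_zero, Derivation.zero_apply]
  simpa [Derivation.commutator_apply, sub_eq_zero] using congr($hcomm p)

section LinearForm

variable {R σ : Type*} [CommSemiring R] [Fintype σ]

noncomputable def linearForm (a : σ → R) : MvPolynomial σ R := ∑ j, C (a j) * X j

@[simp]
theorem linearForm_zero : linearForm (0 : σ → R) = 0 := by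
  simp [linearForm]

theorem isHomogeneous_linearForm (a : σ → R) : (linearForm a).IsHomogeneous 1 :=
  IsHomogeneous.sum _ _ _ fun j _ => isHomogeneous_C_mul_X (a j) j

theorem pderiv_linearForm (a : σ → R) (i : σ) : pderiv i (linearForm a) = C (a i) := by
  classical
  simp [linearForm, pderiv_X, Pi.single_apply]

theorem pderiv_linearForm_pow (a : σ → R) (i : σ) (m : ℕ) :
    pderiv i (linearForm a ^ m) = (m * a i) • linearForm a ^ (m - 1) := by
  rw [pderiv_pow, pderiv_linearForm, smul_eq_C_mul, C_mul, map_natCast]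
  ring

/-- Euler's identity, for a gradient parallel to `a`. -/
theorem nsmul_eq_linearForm_mul {q r : MvPolynomial σ R} {m : ℕ} (hq : q.IsHomogeneous m)
    (a : σ → R) (hgrad : ∀ j, pderiv j q = a j • r) : m • q = linearForm a * r := by
  simp_rw [← hq.sum_X_mul_pderiv, hgrad, linearForm, Finset.sum_mul, smul_eq_C_mul]
  exact Finset.sum_congr rfl fun j _ => by ring

end LinearForm

variable {K σ : Type*} [Field K] [CharZero K] [Fintype σ]

theorem exists_eq_smul_linearForm_pow {a : σ → K} (ha : a ≠ 0) {m : ℕ}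
    {q r : MvPolynomial σ K} (hq : q.IsHomogeneous m) (hgrad : ∀ j, pderiv j q = a j • r) :
    ∃ c : K, q = c • linearForm a ^ m := by
  obtain ⟨j₀, hj₀⟩ : ∃ j, a j ≠ 0 := Function.ne_iff.mp ha
  induction m generalizing q r with
  | zero =>
    refine ⟨coeff 0 q, ?_⟩
    rw [pow_zero, smul_eq_C_mul, mul_one]
    exact totalDegree_eq_zero_iff_eq_C.mp ((totalDegree_zero_iff_isHomogeneous σ).mpr hq)
  | succ m ih =>
    have hr : r = (a j₀)⁻¹ • pderiv j₀ q := by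
      rw [hgrad, smul_smul, inv_mul_cancel₀ hj₀, one_smul]
    have hr_hom : r.IsHomogeneous m := by
      rw [hr]
      exact (homogeneousSubmodule σ K m).smul_mem _ (hq.pderiv (i := j₀))
    have hr_grad : ∀ j, pderiv j r = a j • ((a j₀)⁻¹ • pderiv j₀ r) := by
      intro j
      conv_lhs => rw [hr, Derivation.map_smul, pderiv_pderiv_comm, hgrad, Derivation.map_smul]
      exact smul_comm _ _ _
    obtain ⟨c, rfl⟩ := ih hr_hom hr_grad
    refine ⟨c / (m + 1), ?_⟩
    have heuler := nsmul_eq_linearForm_mul hq a hgrad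
    rw [mul_smul_comm, ← pow_succ', ← Nat.cast_smul_eq_nsmul K] at heuler
    rw [div_eq_inv_mul, mul_smul, ← heuler, smul_smul]
    push_cast
    rw [inv_mul_cancel₀ (Nat.cast_add_one_ne_zero m), one_smul]

theorem exists_common_eigenvalue_linearForm_pow {d : ℕ} (hd : 2 ≤ d) (b : σ → K)
    (D E : MvPolynomial σ K →ₗ[K] MvPolynomial σ K)
    (hD : (D (linearForm b ^ d)).IsHomogeneous d)
    (hAdj : ∀ j, pderiv j (D (linearForm b ^ d)) = E (pderiv j (linearForm b ^ d))) :
    ∃ c : K, D (linearForm b ^ d) = c • linearForm b ^ d ∧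
      E (linearForm b ^ (d - 1)) = c • linearForm b ^ (d - 1) := by
  rcases eq_or_ne b 0 with rfl | hb
  · exact ⟨0, by simp [zero_pow (by omega : d ≠ 0), zero_pow (by omega : d - 1 ≠ 0)]⟩
  have hgrad (j : σ) :
      pderiv j (D (linearForm b ^ d)) = b j • (d : K) • E (linearForm b ^ (d - 1)) := by
    rw [hAdj, pderiv_linearForm_pow, map_smul, mul_comm, mul_smul]
  obtain ⟨c, hc⟩ := exists_eq_smul_linearForm_pow hb hD hgrad
  refine ⟨c, hc, ?_⟩
  obtain ⟨j₀, hj₀⟩ : ∃ j, b j ≠ 0 := Function.ne_iff.mp hb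
  have hj₀d : (d * b j₀ : K) ≠ 0 := mul_ne_zero (by norm_cast; omega) hj₀
  have h := hgrad j₀
  rw [hc, Derivation.map_smul, pderiv_linearForm_pow, smul_smul, ← mul_smul,
    mul_comm (b j₀)] at h
  apply smul_right_injective _ hj₀d
  dsimp only
  rw [smul_smul, mul_comm _ c, h]

end MvPolynomial

theorem stmt10_general {n N d : ℕ} (hd : 2 ≤ d) (a : Fin N → (Fin n → ℝ))
    (ℓ : Fin N → MvPolynomial (Fin n) ℝ)
    (hℓ : ∀ i, ℓ i = ∑ j, C (a i j) * X j)
    (U : Submodule ℝ (MvPolynomial (Fin n) ℝ))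
    (hU : U = Submodule.span ℝ (Set.range fun i => ℓ i ^ d))
    -- `(D, E)` is an element of the adjoint algebra: `D` maps `U` to `U`, `E` maps `V` to `V`,
    -- and `∂_{x_j} ∘ D = E ∘ ∂_{x_j}` on `U` for every `j`.
    (D E : MvPolynomial (Fin n) ℝ →ₗ[ℝ] MvPolynomial (Fin n) ℝ)
    (hDU : ∀ p ∈ U, D p ∈ U)
    (hAdj : ∀ j : Fin n, ∀ p ∈ U, pderiv j (D p) = E (pderiv j p)) :
    ∃ c : Fin N → ℝ, ∀ i,
      D (ℓ i ^ d) = c i • (ℓ i ^ d) ∧ E (ℓ i ^ (d - 1)) = c i • (ℓ i ^ (d - 1)) := by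
  obtain rfl : ℓ = fun i => linearForm (a i) := funext hℓ
  have hU_homogeneous : U ≤ homogeneousSubmodule (Fin n) ℝ d := by
    rw [hU, Submodule.span_le]
    rintro _ ⟨i, rfl⟩
    simpa using (isHomogeneous_linearForm (a i)).pow d
  have hmem (i : Fin N) : linearForm (a i) ^ d ∈ U := hU ▸ Submodule.subset_span ⟨i, rfl⟩
  choose c hc using fun i => exists_common_eigenvalue_linearForm_pow hd (a i) D E
    (hU_homogeneous (hDU _ (hmem i))) fun j => hAdj j _ (hmem i)
  exact ⟨c, hc⟩

theorem stmt10 {n N d : ℕ} (hd : 2 ≤ d) (a : Fin N → (Fin n → ℝ))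
    (ℓ : Fin N → MvPolynomial (Fin n) ℝ)
    (hℓ : ∀ i, ℓ i = ∑ j, C (a i j) * X j)
    (U V : Submodule ℝ (MvPolynomial (Fin n) ℝ))
    (hU : U = Submodule.span ℝ (Set.range fun i => ℓ i ^ d))
    (hV : V = Submodule.span ℝ (Set.range fun i => ℓ i ^ (d - 1)))
    -- `(D, E)` is an element of the adjoint algebra: `D` maps `U` to `U`, `E` maps `V` to `V`,
    -- and `∂_{x_j} ∘ D = E ∘ ∂_{x_j}` on `U` for every `j`.
    (D E : MvPolynomial (Fin n) ℝ →ₗ[ℝ] MvPolynomial (Fin n) ℝ)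
    (hDU : ∀ p ∈ U, D p ∈ U) (hEV : ∀ q ∈ V, E q ∈ V)
    (hAdj : ∀ j : Fin n, ∀ p ∈ U, pderiv j (D p) = E (pderiv j p)) :
    ∃ c : Fin N → ℝ, ∀ i,
      D (ℓ i ^ d) = c i • (ℓ i ^ d) ∧ E (ℓ i ^ (d - 1)) = c i • (ℓ i ^ (d - 1)) :=
  stmt10_general hd a ℓ hℓ U hU D E hDU hAdj
end

section
/- In the subspace clustering setting, let (D, E) be an element of the adjoint algebra with associated scalars c_1,...,c_N (i.e. D·ℓ_i^d = c_i·ℓ_i^d for all i). If I ⊆ [N] is a minimal set such that the powers {ℓ_i^{d−1} : i ∈ I} are linearly dependent, then c_i = c_{i'} for all i, i' ∈ I. -/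
/-! A minimal dependent set `{vᵢ}` carries a relation `∑ gᵢ vᵢ = 0` with every `gᵢ ≠ 0`. Applying `E`
and subtracting `c_{i₀}` times the relation gives `∑ gᵢ (cᵢ - c_{i₀}) vᵢ = 0`, in which the
`i₀`-term vanishes; independence of the remaining vectors forces `cᵢ = c_{i₀}`. -/

section MinimalDependent

variable {R M ι : Type*} [AddCommGroup M] {v : ι → M} {s : Finset ι} [DecidableEq ι]

theorem eq_zero_of_sum_smul_eq_zero_of_linearIndepOn_erase [Ring R] [Module R M]
    {g : ι → R} {j : ι} (hind : LinearIndepOn R v ↑(s.erase j))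
    (hsum : ∑ i ∈ s, g i • v i = 0) (hj : g j = 0) : ∀ i ∈ s, g i = 0 := by
  intro i hi
  by_cases hij : i = j
  · rwa [hij]
  · refine linearIndepOn_finset_iff.mp hind g ?_ i (Finset.mem_erase.mpr ⟨hij, hi⟩)
    rwa [Finset.sum_erase s (by rw [hj, zero_smul])]

theorem exists_sum_smul_eq_zero_forall_ne_zero [Ring R] [Module R M]
    (hdep : ¬ LinearIndepOn R v ↑s) (hmin : ∀ j ∈ s, LinearIndepOn R v ↑(s.erase j)) :
    ∃ g : ι → R, ∑ i ∈ s, g i • v i = 0 ∧ ∀ i ∈ s, g i ≠ 0 := by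
  obtain ⟨g, hsum, i₀, hi₀, hgi₀⟩ := not_linearIndepOn_finset_iff.mp hdep
  refine ⟨g, hsum, fun j hj hgj => hgi₀ ?_⟩
  exact eq_zero_of_sum_smul_eq_zero_of_linearIndepOn_erase (hmin j hj) hsum hgj i₀ hi₀

theorem eigenvalue_eq_of_minimal_dependent [CommRing R] [NoZeroDivisors R] [Module R M]
    (E : M →ₗ[R] M) (c : ι → R) (hE : ∀ i ∈ s, E (v i) = c i • v i)
    (hdep : ¬ LinearIndepOn R v ↑s) (hmin : ∀ j ∈ s, LinearIndepOn R v ↑(s.erase j)) :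
    ∀ i ∈ s, ∀ i' ∈ s, c i = c i' := by
  intro i hi i₀ hi₀
  obtain ⟨g, hsum, hg⟩ := exists_sum_smul_eq_zero_forall_ne_zero hdep hmin
  have hshift : ∑ k ∈ s, (g k * (c k - c i₀)) • v k = 0 := by
    calc ∑ k ∈ s, (g k * (c k - c i₀)) • v k
        = E (∑ k ∈ s, g k • v k) - c i₀ • ∑ k ∈ s, g k • v k := by
          rw [map_sum, Finset.smul_sum, ← Finset.sum_sub_distrib]
          refine Finset.sum_congr rfl fun k hk => ?_
          rw [map_smul, hE k hk, smul_smul, smul_smul, ← sub_smul, mul_sub, mul_comm (c i₀)]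
      _ = 0 := by rw [hsum, map_zero, smul_zero, sub_zero]
  have hcoeff := eq_zero_of_sum_smul_eq_zero_of_linearIndepOn_erase (hmin i₀ hi₀) hshift
    (by rw [sub_self, mul_zero]) i hi
  exact sub_eq_zero.mp ((mul_eq_zero.mp hcoeff).resolve_left (hg i hi))

end MinimalDependent

open MvPolynomial

theorem stmt11_general {n N d : ℕ}
    (ℓ : Fin N → MvPolynomial (Fin n) ℝ)
    -- `(D, E)` is an element of the adjoint algebra
    (D E : MvPolynomial (Fin n) ℝ →ₗ[ℝ] MvPolynomial (Fin n) ℝ)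
    -- with associated scalars `c`
    (c : Fin N → ℝ)
    (hc : ∀ i, D (ℓ i ^ d) = c i • (ℓ i ^ d) ∧ E (ℓ i ^ (d - 1)) = c i • (ℓ i ^ (d - 1)))
    -- `I` is a minimal linearly dependent set among `{ℓ_i^{d-1}}`
    (I : Finset (Fin N))
    (hdep : ¬ LinearIndependent ℝ (fun i : I => ℓ i.1 ^ (d - 1)))
    (hmin : ∀ J : Finset (Fin N), J ⊂ I →
      LinearIndependent ℝ (fun i : J => ℓ i.1 ^ (d - 1))) :
    ∀ i ∈ I, ∀ i' ∈ I, c i = c i' :=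
  eigenvalue_eq_of_minimal_dependent E c (fun i _ => (hc i).2) hdep
    fun j hj => hmin (I.erase j) (Finset.erase_ssubset hj)

theorem stmt11 {n N d : ℕ} (hd : 2 ≤ d) (a : Fin N → (Fin n → ℝ))
    (ℓ : Fin N → MvPolynomial (Fin n) ℝ)
    (hℓ : ∀ i, ℓ i = ∑ j, C (a i j) * X j)
    (U V : Submodule ℝ (MvPolynomial (Fin n) ℝ))
    (hU : U = Submodule.span ℝ (Set.range fun i => ℓ i ^ d))
    (hV : V = Submodule.span ℝ (Set.range fun i => ℓ i ^ (d - 1)))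
    -- `(D, E)` is an element of the adjoint algebra
    (D E : MvPolynomial (Fin n) ℝ →ₗ[ℝ] MvPolynomial (Fin n) ℝ)
    (hDU : ∀ p ∈ U, D p ∈ U) (hEV : ∀ q ∈ V, E q ∈ V)
    (hAdj : ∀ j : Fin n, ∀ p ∈ U, pderiv j (D p) = E (pderiv j p))
    -- with associated scalars `c`
    (c : Fin N → ℝ)
    (hc : ∀ i, D (ℓ i ^ d) = c i • (ℓ i ^ d) ∧ E (ℓ i ^ (d - 1)) = c i • (ℓ i ^ (d - 1)))
    -- `I` is a minimal linearly dependent set among `{ℓ_i^{d-1}}`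
    (I : Finset (Fin N))
    (hdep : ¬ LinearIndependent ℝ (fun i : I => ℓ i.1 ^ (d - 1)))
    (hmin : ∀ J : Finset (Fin N), J ⊂ I →
      LinearIndependent ℝ (fun i : J => ℓ i.1 ^ (d - 1))) :
    ∀ i ∈ I, ∀ i' ∈ I, c i = c i' :=
  stmt11_general ℓ D E c hc I hdep hmin
end

section
/- For the base case n = 2: let α_1,...,α_{k+1} be distinct reals and define p_i(x_1,x_2) = Π_{j≠i}(x_1 + α_j x_2) for i ∈ [k+1]. Then p_1,...,p_{k+1} form a basis of the space of degree-k homogeneous polynomials in two variables. -/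
/-!
Evaluating at `(-α i, 1)` kills every `p j` with `j ≠ i` (it contains the factor
`x₁ + α i x₂`) but not `p i`, since the `α j` are distinct; so the `p i` are linearly
independent. They are `k + 1` forms of degree `k`, and the space of binary forms of degree `k`
has dimension `k + 1`, so they span it.
-/

open MvPolynomial

namespace MvPolynomial

variable {σ ι R K : Type*} [CommRing R] [Field K]

theorem linearIndependent_of_eval_pairwise_eq_zero (p : ι → MvPolynomial σ K) (x : ι → σ → K)
    (hoff : Pairwise fun i j ↦ eval (x i) (p j) = 0) (hdiag : ∀ i, eval (x i) (p i) ≠ 0) :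
    LinearIndependent K p :=
  LinearIndependent.of_pairwise_dual_eq_zero_one p
    (fun i ↦ (eval (x i) (p i))⁻¹ • (aeval (x i)).toLinearMap)
    (fun i j hij ↦ by simp [hoff hij])
    (fun i ↦ by simp [hdiag i])

theorem finrank_homogeneousSubmodule [Fintype σ] (n : ℕ) :
    Module.finrank K (homogeneousSubmodule σ K n) = (Fintype.card σ + n - 1).choose n := by
  classical
  have hset : {d : σ →₀ ℕ | d.degree = n} = (Finset.univ.finsuppAntidiag n : Finset (σ →₀ ℕ)) := by
    ext d
    simp [Finsupp.degree_eq_sum]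
  rw [homogeneousSubmodule_eq_finsupp_supported, hset,
    (AddMonoidAlgebra.supportedEquivFinsupp _).finrank_eq, Module.finrank_finsupp_self]
  simp [Finset.card_finsuppAntidiag_nat_eq_choose]

theorem isHomogeneous_X_zero_add_C_mul_X_one (a : R) :
    (X 0 + C a * X 1 : MvPolynomial (Fin 2) R).IsHomogeneous 1 :=
  (isHomogeneous_X R 0).add (by simpa using (isHomogeneous_C _ a).mul (isHomogeneous_X R 1))

theorem eval_X_zero_add_C_mul_X_one (a b : R) :
    eval ![-a, 1] (X 0 + C b * X 1 : MvPolynomial (Fin 2) R) = b - a := by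
  simp only [map_add, map_mul, eval_X, eval_C, Matrix.cons_val_zero, Matrix.cons_val_one,
    Matrix.cons_val_fin_one, mul_one]
  ring

variable [Fintype ι] [DecidableEq ι]

theorem isHomogeneous_prod_erase_X_zero_add_C_mul_X_one (α : ι → R) (i : ι) :
    (∏ j ∈ Finset.univ.erase i, (X 0 + C (α j) * X 1 : MvPolynomial (Fin 2) R)).IsHomogeneous
      (Fintype.card ι - 1) := by
  simpa [Finset.card_erase_of_mem] using IsHomogeneous.prod (Finset.univ.erase i) _ (fun _ ↦ 1)
    fun j _ ↦ isHomogeneous_X_zero_add_C_mul_X_one (α j)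

theorem linearIndependent_prod_erase_X_zero_add_C_mul_X_one (α : ι → K)
    (hα : Function.Injective α) :
    LinearIndependent K fun i ↦
      ∏ j ∈ Finset.univ.erase i, (X 0 + C (α j) * X 1 : MvPolynomial (Fin 2) K) := by
  refine linearIndependent_of_eval_pairwise_eq_zero _ (fun i ↦ ![-α i, 1]) (fun i j hij ↦ ?_)
    fun i ↦ ?_
  · simp only [map_prod, eval_X_zero_add_C_mul_X_one]
    exact Finset.prod_eq_zero (Finset.mem_erase.2 ⟨hij, Finset.mem_univ i⟩) (sub_self _)
  · simp only [map_prod, eval_X_zero_add_C_mul_X_one]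
    exact Finset.prod_ne_zero_iff.2 fun j hj ↦ sub_ne_zero.2 (hα.ne (Finset.ne_of_mem_erase hj))

end MvPolynomial

theorem stmt13 {k : ℕ} (α : Fin (k + 1) → ℝ) (hα : Function.Injective α)
    (p : Fin (k + 1) → MvPolynomial (Fin 2) ℝ)
    (hp : ∀ i, p i = ∏ j ∈ Finset.univ.erase i, (X 0 + C (α j) * X 1)) :
    LinearIndependent ℝ p ∧
      Submodule.span ℝ (Set.range p) = homogeneousSubmodule (Fin 2) ℝ k := by
  obtain rfl : p = fun i ↦ ∏ j ∈ Finset.univ.erase i, (X 0 + C (α j) * X 1) := funext hp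
  have hind := linearIndependent_prod_erase_X_zero_add_C_mul_X_one α hα
  have : FiniteDimensional ℝ (homogeneousSubmodule (Fin 2) ℝ k) :=
    Module.Finite.iff_fg.2 (homogeneousSubmodule_fg _ _ k)
  refine ⟨hind, Submodule.eq_of_le_of_finrank_eq ?_ ?_⟩
  · rw [Submodule.span_le]
    rintro _ ⟨i, rfl⟩
    simpa using isHomogeneous_prod_erase_X_zero_add_C_mul_X_one α i
  · rw [finrank_span_eq_card hind, finrank_homogeneousSubmodule]
    simp [add_comm 1 k, Nat.choose_succ_self_right]
end

section
/- Let A be the matrix with columns being the polynomials (a_i·x)^d ∈ R[x]^{=d} for points a_1,...,a_N ∈ R^n of unit norm, written in the Bombieri orthonormal basis, and let Ã be the analogous matrix for points ã_1,...,ã_N of unit norm with ‖a_i − ã_i‖ ≤ ε for all i. Then the Frobenius norm of A − Ã is at most √N·d·ε. -/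
/-! For unit vectors `a`, `b` put `t = a ⬝ᵥ b`. The Bombieri weight `α!/d!` cancels one multinomial
coefficient of `(a·x)^d`, so by the multinomial theorem `⟨(a·x)^d, (b·x)^d⟩_B = t^d`. Hence
`‖(a·x)^d - (b·x)^d‖_B² = 2 - 2t^d ≤ d (2 - 2t) = d ‖a - b‖²` by Bernoulli's inequality (`t ≥ -1`),
and `d ≤ d²` gives the bound for each column. -/

open MvPolynomial

/-- The Bombieri inner product on degree-`d` homogeneous polynomials:
`⟨x^α, x^β⟩ = α!/d!` if `α = β` and `0` otherwise. -/
noncomputable def bombieri {n : ℕ} (d : ℕ) (p q : MvPolynomial (Fin n) ℝ) : ℝ :=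
  ∑ α ∈ p.support ∪ q.support,
    p.coeff α * q.coeff α * ((∏ i, ((α i).factorial : ℝ)) / (d.factorial : ℝ))

/-- The linear form `a·x`. -/
noncomputable def linForm {n : ℕ} (a : Fin n → ℝ) : MvPolynomial (Fin n) ℝ :=
  ∑ j, C (a j) * X j

open Finset

section

variable {n : ℕ}

lemma coeff_linForm_pow (a : Fin n → ℝ) (d : ℕ) (α : Fin n →₀ ℕ) :
    coeff α (linForm a ^ d) =
      if ∑ i, α i = d then (Nat.multinomial univ α : ℝ) * ∏ i, a i ^ α i else 0 := by
  have hlin : linForm a = ∑ j, a j • X j := by simp only [linForm, smul_eq_C_mul]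
  rw [hlin, coeff_linearCombination_X_pow_of_fintype, Finsupp.sum_fintype _ _ (fun _ => rfl),
    Finsupp.prod_fintype _ _ (fun _ => pow_zero _),
    Finsupp.multinomial_eq_of_support_subset (subset_univ _)]

lemma coeff_linForm_pow_mul_coeff_linForm_pow (a b : Fin n → ℝ) (d : ℕ) (α : Fin n →₀ ℕ) :
    coeff α (linForm a ^ d) * coeff α (linForm b ^ d) *
        ((∏ i, ((α i).factorial : ℝ)) / (d.factorial : ℝ)) =
      coeff α (linForm (a * b) ^ d) := by
  simp only [coeff_linForm_pow]
  split_ifs with hα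
  · have hspec : (∏ i, ((α i).factorial : ℝ)) * Nat.multinomial univ α = d.factorial := by
      exact_mod_cast hα ▸ Nat.multinomial_spec univ α
    have hd : (d.factorial : ℝ) ≠ 0 := by positivity
    simp only [Pi.mul_apply, mul_pow, prod_mul_distrib]
    field_simp
    linear_combination (Nat.multinomial univ α : ℝ) * (∏ i, a i ^ α i) * (∏ i, b i ^ α i) * hspec
  · simp

lemma bombieri_eq_sum_of_subset (d : ℕ) {p q : MvPolynomial (Fin n) ℝ}
    {T : Finset (Fin n →₀ ℕ)} (hp : p.support ⊆ T) (hq : q.support ⊆ T) :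
    bombieri d p q =
      ∑ α ∈ T, p.coeff α * q.coeff α * ((∏ i, ((α i).factorial : ℝ)) / (d.factorial : ℝ)) := by
  refine sum_subset (union_subset hp hq) fun α _ hα => ?_
  rw [notMem_support_iff.mp fun h => hα (mem_union_left _ h), zero_mul, zero_mul]

lemma bombieri_sub_sub_self (d : ℕ) (p q : MvPolynomial (Fin n) ℝ) :
    bombieri d (p - q) (p - q) = bombieri d p p - 2 * bombieri d p q + bombieri d q q := by
  have hp : p.support ⊆ p.support ∪ q.support := subset_union_left
  have hq : q.support ⊆ p.support ∪ q.support := subset_union_right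
  have hpq : (p - q).support ⊆ p.support ∪ q.support := support_sub _ _ _
  rw [bombieri_eq_sum_of_subset d hpq hpq, bombieri_eq_sum_of_subset d hp hp,
    bombieri_eq_sum_of_subset d hp hq, bombieri_eq_sum_of_subset d hq hq, mul_sum,
    ← sum_sub_distrib, ← sum_add_distrib]
  refine sum_congr rfl fun α _ => ?_
  rw [coeff_sub]
  ring

lemma sum_coeff_eq_eval_one {p : MvPolynomial (Fin n) ℝ} {T : Finset (Fin n →₀ ℕ)}
    (hp : p.support ⊆ T) : ∑ α ∈ T, p.coeff α = eval 1 p := by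
  simp only [eval_eq', Pi.one_apply, one_pow, prod_const_one, mul_one]
  exact (sum_subset hp fun α _ hα => notMem_support_iff.mp hα).symm

lemma bombieri_linForm_pow (d : ℕ) (a b : Fin n → ℝ) :
    bombieri d (linForm a ^ d) (linForm b ^ d) = (a ⬝ᵥ b) ^ d := by
  set T := (linForm a ^ d).support ∪ (linForm b ^ d).support ∪ (linForm (a * b) ^ d).support
  have ha : (linForm a ^ d).support ⊆ T := subset_union_left.trans subset_union_left
  have hb : (linForm b ^ d).support ⊆ T := subset_union_right.trans subset_union_left
  rw [bombieri_eq_sum_of_subset d ha hb]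
  simp only [coeff_linForm_pow_mul_coeff_linForm_pow]
  rw [sum_coeff_eq_eval_one subset_union_right, linForm, map_pow, map_sum]
  simp [dotProduct]

lemma neg_one_le_dotProduct_of_unit {ι : Type*} [Fintype ι] {a b : ι → ℝ}
    (ha : a ⬝ᵥ a = 1) (hb : b ⬝ᵥ b = 1) : -1 ≤ a ⬝ᵥ b := by
  have hsq : 0 ≤ (a + b) ⬝ᵥ (a + b) := sum_nonneg fun i _ => mul_self_nonneg _
  rw [add_dotProduct, dotProduct_add, dotProduct_add, ha, hb, dotProduct_comm b a] at hsq
  linarith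

lemma bombieri_linForm_pow_sub_le {a b : Fin n → ℝ} (ha : a ⬝ᵥ a = 1) (hb : b ⬝ᵥ b = 1)
    (d : ℕ) :
    bombieri d (linForm a ^ d - linForm b ^ d) (linForm a ^ d - linForm b ^ d) ≤
      d * ((a - b) ⬝ᵥ (a - b)) := by
  have bernoulli := one_add_mul_sub_le_pow (neg_one_le_dotProduct_of_unit ha hb) d
  rw [bombieri_sub_sub_self, bombieri_linForm_pow, bombieri_linForm_pow, bombieri_linForm_pow,
    sub_dotProduct, dotProduct_sub, dotProduct_sub, ha, hb, dotProduct_comm b a, one_pow]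
  linarith

end

/-- The Frobenius norm of `A − Ã`, where `A` (resp. `Ã`) is the matrix whose `i`-th column is
the polynomial `(a_i·x)^d` (resp. `(ã_i·x)^d`) written in the Bombieri orthonormal basis,
is at most `√N·d·ε`. -/
theorem stmt19 {n N d : ℕ} (ε : ℝ) (a at' : Fin N → (Fin n → ℝ))
    (ha : ∀ i, ∑ j, a i j ^ 2 = 1) (hat : ∀ i, ∑ j, at' i j ^ 2 = 1)
    (hclose : ∀ i, Real.sqrt (∑ j, (a i j - at' i j) ^ 2) ≤ ε) :
    Real.sqrt (∑ i, bombieri d ((linForm (a i)) ^ d - (linForm (at' i)) ^ d)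
        ((linForm (a i)) ^ d - (linForm (at' i)) ^ d)) ≤
      Real.sqrt N * d * ε := by
  have hunit : ∀ v : Fin n → ℝ, ∑ j, v j ^ 2 = 1 → v ⬝ᵥ v = 1 := fun v hv => by
    simpa [dotProduct, sq] using hv
  have hterm : ∀ i, bombieri d ((linForm (a i)) ^ d - (linForm (at' i)) ^ d)
      ((linForm (a i)) ^ d - (linForm (at' i)) ^ d) ≤ (d * ε) ^ 2 := fun i => by
    obtain ⟨-, hdist⟩ := Real.sqrt_le_iff.mp (hclose i)
    have hd : (d : ℝ) ≤ d ^ 2 := by exact_mod_cast Nat.le_self_pow two_ne_zero d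
    replace hdist : (a i - at' i) ⬝ᵥ (a i - at' i) ≤ ε ^ 2 := by
      simpa [dotProduct, sq] using hdist
    calc _ ≤ d * ((a i - at' i) ⬝ᵥ (a i - at' i)) :=
          bombieri_linForm_pow_sub_le (hunit _ (ha i)) (hunit _ (hat i)) d
      _ ≤ d * ε ^ 2 := by gcongr
      _ ≤ (d * ε) ^ 2 := by rw [mul_pow]; gcongr
  rcases Nat.eq_zero_or_pos N with rfl | hN
  · simp
  have hε : 0 ≤ ε := (Real.sqrt_nonneg _).trans (hclose ⟨0, hN⟩)
  calc _ ≤ Real.sqrt (∑ _i : Fin N, ((d : ℝ) * ε) ^ 2) :=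
        Real.sqrt_le_sqrt (sum_le_sum fun i _ => hterm i)
    _ = Real.sqrt N * d * ε := by
        rw [sum_const, card_univ, Fintype.card_fin, nsmul_eq_mul, Real.sqrt_mul (Nat.cast_nonneg _),
          Real.sqrt_sq (by positivity), mul_assoc]
end
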